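/- Let X and Y be independent exponentially distributed random variables with means a > 0 and b > 0, define C_s = max(0, log₂(1+X) − log₂(1+Y)), and let R > 0. Then the conditional probability P(C_s < R | X > Y) equals 1 − ((a+b)/(a + 2^R·b)) · exp(−(2^R − 1)/a). -/

import Mathlib

/-!
Pass to the joint law `expMeasure (1/a) ⊗ expMeasure (1/b)` of `(X, Y)` and write `c = 2 ^ R`.
For `y ≥ 0`, `x > y ∧ C_s ≥ R` holds iff `x ≥ c y + (c - 1)`, so over `y ≥ 0` the sections of both
`{X > Y}` and `{X > Y, C_s ≥ R}` are tails `x > α y + β` or `x ≥ α y + β` with `α, β ≥ 0`. By Fubini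
such an event has probability `exp (-β/a)` times the Laplace transform of `Y` at `α/a`, which gives
`a/(a+b)` and `exp (-(c-1)/a) · a/(a + c b)`; the conditional probability is one minus their ratio.
-/

open MeasureTheory ProbabilityTheory Real Set

/-- `C_s` of the paper, for the channel gains `x` (main) and `y` (eavesdropper). -/
noncomputable def secrecyCapacity (x y : ℝ) : ℝ :=
  max 0 (logb 2 (1 + x) - logb 2 (1 + y))

lemma measurable_secrecyCapacity :
    Measurable fun p : ℝ × ℝ => secrecyCapacity p.1 p.2 := by
  unfold secrecyCapacity logb
  fun_prop

lemma lt_and_le_secrecyCapacity_iff {x y R : ℝ} (hR : 0 < R) (hy : 0 ≤ y) :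
    y < x ∧ R ≤ secrecyCapacity x y ↔ 2 ^ R * y + (2 ^ R - 1) ≤ x := by
  have hc : 1 < (2 : ℝ) ^ R := one_lt_rpow one_lt_two hR
  have hy1 : 0 < 1 + y := by linarith
  have key (hx1 : 0 < 1 + x) :
      R ≤ logb 2 (1 + x) - logb 2 (1 + y) ↔ 2 ^ R * y + (2 ^ R - 1) ≤ x := by
    rw [← logb_div hx1.ne' hy1.ne', le_logb_iff_rpow_le one_lt_two (div_pos hx1 hy1),
      le_div_iff₀ hy1]
    constructor <;> intro h <;> linarith
  constructor
  · rintro ⟨hyx, h⟩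
    exact (key (by linarith)).1 ((le_max_iff.1 h).resolve_left hR.not_ge)
  · intro h
    have hyx : y < x := by nlinarith
    exact ⟨hyx, le_max_of_le_right ((key (by linarith)).2 h)⟩

namespace ProbabilityTheory

lemma cond_eq_one_sub_cond_compl {Ω : Type*} [MeasurableSpace Ω] {μ : Measure Ω}
    [IsFiniteMeasure μ] {s t : Set Ω} (hμs : μ s ≠ 0) (ht : MeasurableSet t) :
    μ[t | s] = 1 - μ[tᶜ | s] := by
  have := cond_isProbabilityMeasure (μ := μ) hμs
  rw [prob_compl_eq_one_sub ht, ENNReal.sub_sub_cancel ENNReal.one_ne_top prob_le_one]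

lemma IndepFun.measure_preimage_prodMk {Ω β γ : Type*} [MeasurableSpace Ω] [MeasurableSpace β]
    [MeasurableSpace γ] {μ : Measure Ω} [IsFiniteMeasure μ] {X : Ω → β} {Y : Ω → γ}
    (hXY : IndepFun X Y μ) (hX : Measurable X) (hY : Measurable Y) {A : Set (β × γ)}
    (hA : MeasurableSet A) :
    μ ((fun ω => (X ω, Y ω)) ⁻¹' A) = ((μ.map X).prod (μ.map Y)) A := by
  rw [← Measure.map_apply (hX.prodMk hY) hA,
    (indepFun_iff_map_prod_eq_prod_map_map hX.aemeasurable hY.aemeasurable).1 hXY]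

lemma ae_nonneg_expMeasure (r : ℝ) : ∀ᵐ y ∂expMeasure r, 0 ≤ y := by
  have hneg : {y : ℝ | ¬0 ≤ y} = Iio 0 := by
    ext y
    simp
  rw [ae_iff, hneg, expMeasure, gammaMeasure, withDensity_apply _ measurableSet_Iio]
  exact lintegral_gammaPDF_of_nonpos le_rfl

variable {r : ℝ}

lemma expMeasure_Ioi (hr : 0 < r) {t : ℝ} (ht : 0 ≤ t) :
    expMeasure r (Ioi t) = ENNReal.ofReal (exp (-(r * t))) := by
  have := isProbabilityMeasure_expMeasure hr
  have hcdf : 0 ≤ 1 - exp (-(r * t)) := sub_nonneg.2 (exp_le_one_iff.2 (by nlinarith))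
  rw [← compl_Iic, prob_compl_eq_one_sub measurableSet_Iic, ← ofReal_cdf, cdf_expMeasure_eq hr,
    if_pos ht, ← ENNReal.ofReal_one, ← ENNReal.ofReal_sub _ hcdf, sub_sub_cancel]

lemma expMeasure_Ici (hr : 0 < r) {t : ℝ} (ht : 0 ≤ t) :
    expMeasure r (Ici t) = ENNReal.ofReal (exp (-(r * t))) := by
  have hatom : expMeasure r {t} = 0 :=
    withDensity_absolutelyContinuous _ _ (measure_singleton t)
  rw [← measure_congr (Ioi_ae_eq_Ici' hatom), expMeasure_Ioi hr ht]

lemma lintegral_exp_neg_mul_expMeasure (hr : 0 < r) {s : ℝ} (hs : 0 ≤ s) :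
    ∫⁻ y, ENNReal.ofReal (exp (-(s * y))) ∂expMeasure r = ENNReal.ofReal (r / (r + s)) := by
  have hrs : 0 < r + s := by linarith
  have hdensity : ∀ y, exponentialPDF r y * ENNReal.ofReal (exp (-(s * y)))
      = ENNReal.ofReal (r / (r + s)) * exponentialPDF (r + s) y := by
    intro y
    rcases lt_or_ge y 0 with hy | hy
    · simp [exponentialPDF_of_neg hy]
    · rw [exponentialPDF_of_nonneg hy, exponentialPDF_of_nonneg hy,
        ← ENNReal.ofReal_mul (by positivity), ← ENNReal.ofReal_mul (by positivity)]
      congr 1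
      rw [mul_assoc, ← exp_add, ← mul_assoc, div_mul_cancel₀ _ hrs.ne']
      ring_nf
  have hpdf (q : ℝ) : Measurable (exponentialPDF q) :=
    (measurable_exponentialPDFReal q).ennreal_ofReal
  change ∫⁻ y, _ ∂volume.withDensity (exponentialPDF r) = _
  rw [lintegral_withDensity_eq_lintegral_mul _ (hpdf r) (by fun_prop)]
  simp only [Pi.mul_apply]
  rw [lintegral_congr hdensity,
    lintegral_const_mul _ (hpdf _),
    lintegral_exponentialPDF_eq_one hrs, mul_one]

lemma expMeasure_prod_apply_of_sections {s α β : ℝ} (hr : 0 < r) (hs : 0 < s) (hα : 0 ≤ α)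
    {A : Set (ℝ × ℝ)} (hA : MeasurableSet A)
    (hsection : ∀ y, 0 ≤ y →
      expMeasure r ((fun x => (x, y)) ⁻¹' A) = ENNReal.ofReal (exp (-(r * (α * y + β))))) :
    ((expMeasure r).prod (expMeasure s)) A
      = ENNReal.ofReal (exp (-(r * β)) * (s / (s + r * α))) := by
  have hsplit : ∀ᵐ y ∂expMeasure s, expMeasure r ((fun x => (x, y)) ⁻¹' A)
      = ENNReal.ofReal (exp (-(r * β))) * ENNReal.ofReal (exp (-(r * α * y))) := by
    filter_upwards [ae_nonneg_expMeasure s] with y hy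
    rw [hsection y hy, ← ENNReal.ofReal_mul (exp_pos _).le, ← exp_add]
    ring_nf
  have := isProbabilityMeasure_expMeasure hr
  have := isProbabilityMeasure_expMeasure hs
  rw [Measure.prod_apply_symm hA, lintegral_congr_ae hsplit, lintegral_const_mul _ (by fun_prop),
    lintegral_exp_neg_mul_expMeasure hs (by positivity), ← ENNReal.ofReal_mul (exp_pos _).le]

end ProbabilityTheory

section SecrecyOutage

variable {r s : ℝ}

lemma expMeasure_prod_setOf_snd_lt_fst (hr : 0 < r) (hs : 0 < s) :
    ((expMeasure r).prod (expMeasure s)) {p : ℝ × ℝ | p.2 < p.1}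
      = ENNReal.ofReal (s / (s + r)) := by
  rw [expMeasure_prod_apply_of_sections (α := 1) (β := 0) hr hs zero_le_one
    (measurableSet_lt measurable_snd measurable_fst) fun y hy => ?_]
  · simp
  · rw [one_mul, add_zero, ← expMeasure_Ioi hr hy]
    rfl

lemma expMeasure_prod_snd_lt_fst_and_le_secrecyCapacity (hr : 0 < r) (hs : 0 < s) {R : ℝ}
    (hR : 0 < R) :
    ((expMeasure r).prod (expMeasure s))
        ({p : ℝ × ℝ | p.2 < p.1} ∩ {p | secrecyCapacity p.1 p.2 < R}ᶜ)
      = ENNReal.ofReal (exp (-(r * (2 ^ R - 1))) * (s / (s + r * 2 ^ R))) := by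
  have hc : 1 < (2 : ℝ) ^ R := one_lt_rpow one_lt_two hR
  refine expMeasure_prod_apply_of_sections hr hs (by positivity)
    ((measurableSet_lt measurable_snd measurable_fst).inter
      (measurableSet_lt measurable_secrecyCapacity measurable_const).compl) fun y hy => ?_
  rw [← expMeasure_Ici hr (by nlinarith)]
  congr 1
  ext x
  simpa [not_lt] using lt_and_le_secrecyCapacity_iff hR hy

end SecrecyOutage

/-- Conditional outage probability: for independent exponential random variables `X`
(mean `a`) and `Y` (mean `b`), secrecy capacity `C_s = max 0 (log₂(1+X) - log₂(1+Y))`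
and target rate `R > 0`,
`P(C_s < R | X > Y) = 1 - ((a+b)/(a + 2^R b)) exp(-(2^R - 1)/a)`. -/
theorem conditional_outage_probability
    {Ω : Type*} [MeasureSpace Ω] [IsProbabilityMeasure (ℙ : Measure Ω)]
    (X Y : Ω → ℝ) (a b R : ℝ) (ha : 0 < a) (hb : 0 < b) (hR : 0 < R)
    (hXm : Measurable X) (hYm : Measurable Y)
    (hindep : IndepFun X Y ℙ)
    (hX : Measure.map X ℙ = expMeasure (1 / a))
    (hY : Measure.map Y ℙ = expMeasure (1 / b)) :
    ProbabilityTheory.cond ℙ {ω | X ω > Y ω}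
        {ω | max 0 (logb 2 (1 + X ω) - logb 2 (1 + Y ω)) < R}
      = ENNReal.ofReal
          (1 - (a + b) / (a + 2 ^ R * b) * Real.exp (-(2 ^ R - 1) / a)) := by
  have hr : 0 < 1 / a := by positivity
  have hs : 0 < 1 / b := by positivity
  set T : Set (ℝ × ℝ) := {p | p.2 < p.1}
  set S : Set (ℝ × ℝ) := {p | secrecyCapacity p.1 p.2 < R}
  have hT : MeasurableSet T := measurableSet_lt measurable_snd measurable_fst
  have hS : MeasurableSet S := measurableSet_lt measurable_secrecyCapacity measurable_const
  have hjoint {A : Set (ℝ × ℝ)} (hA : MeasurableSet A) :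
      ℙ ((fun ω => (X ω, Y ω)) ⁻¹' A) = ((expMeasure (1 / a)).prod (expMeasure (1 / b))) A := by
    rw [hindep.measure_preimage_prodMk hXm hYm hA, hX, hY]
  have hPT : ℙ ((fun ω => (X ω, Y ω)) ⁻¹' T) ≠ 0 := by
    rw [hjoint hT, expMeasure_prod_setOf_snd_lt_fst hr hs, ENNReal.ofReal_ne_zero_iff]
    positivity
  change ℙ[(fun ω => (X ω, Y ω)) ⁻¹' S | (fun ω => (X ω, Y ω)) ⁻¹' T] = _
  rw [cond_eq_one_sub_cond_compl hPT (hXm.prodMk hYm hS), cond_apply (hXm.prodMk hYm hT),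
    ← preimage_compl, ← preimage_inter, hjoint hT, hjoint (hT.inter hS.compl),
    expMeasure_prod_setOf_snd_lt_fst hr hs,
    expMeasure_prod_snd_lt_fst_and_le_secrecyCapacity hr hs hR, ← ENNReal.div_eq_inv_mul,
    ← ENNReal.ofReal_div_of_pos (by positivity), ← ENNReal.ofReal_one,
    ← ENNReal.ofReal_sub _ (by positivity), show -(2 ^ R - 1) / a = -(1 / a * (2 ^ R - 1)) by ring]
  congr 1
  field_simp
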